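/- arXiv:1708.00140 — 3 statements merged into one kernel-verified Lean document; each statement's English description precedes it below -/
import Mathlib

section
/- (Proxy Theorem, tail bound) Let V ≥ 0, β_{i} > 0, and DSF_i satisfy |x - DSF_i(x)| ≤ ω_i for all x (i ≥ 1). Let T_0 = V, Tp_i = (1 + ψ_i(V, T_i)) T_i, v_{i+1} = DSF_{i+1}(β_{i+1} Tp_i), T_{i+1} = β_{i+1} T_i - v_{i+1}. Suppose |ψ_i(V,t)| ≤ Ψ_i(V,|t|) for all i and t, where each Ψ_i is nondecreasing in its second argument. Define τ_0(u) = u and τ_{i+1}(u) = β_{i+1} Ψ_i(u, τ_i(u)) τ_i(u) + ω_{i+1}. Then |T_i| ≤ τ_i(V) for all i ∈ ℕ. -/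
theorem proxy_theorem_tail_bound
    (V : ℝ) (hV : 0 ≤ V) (β ω : ℕ → ℝ)
    (DSF : ℕ → ℝ → ℝ) (ψ Ψ : ℕ → ℝ → ℝ → ℝ)
    (T Tp v : ℕ → ℝ) (τ : ℕ → ℝ → ℝ)
    (hβ : ∀ i, 0 < β i)
    (hDSF : ∀ i, 1 ≤ i → ∀ x : ℝ, |x - DSF i x| ≤ ω i)
    (hT0 : T 0 = V)
    (hTp : ∀ i, Tp i = (1 + ψ i V (T i)) * T i)
    (hv : ∀ i, v (i + 1) = DSF (i + 1) (β (i + 1) * Tp i))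
    (hT : ∀ i, T (i + 1) = β (i + 1) * T i - v (i + 1))
    (hψ : ∀ i t, |ψ i V t| ≤ Ψ i V |t|)
    (hΨmono : ∀ i x y, 0 ≤ x → x ≤ y → Ψ i V x ≤ Ψ i V y)
    (hτ0 : ∀ u, τ 0 u = u)
    (hτ : ∀ i u, τ (i + 1) u = β (i + 1) * Ψ i u (τ i u) * τ i u + ω (i + 1)) :
    ∀ i, |T i| ≤ τ i V := by
  intro i
  induction i with
  | zero => rw [hT0, hτ0, abs_of_nonneg hV]
  | succ i ih =>
    have key : T (i + 1) = -(β (i + 1) * (ψ i V (T i) * T i))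
        + (β (i + 1) * Tp i - v (i + 1)) := by
      rw [hT, hTp]; ring
    have hω : |β (i + 1) * Tp i - v (i + 1)| ≤ ω (i + 1) := by
      rw [hv]; exact hDSF (i + 1) (Nat.le_add_left 1 i) _
    have hΨ0 : 0 ≤ Ψ i V |T i| := le_trans (abs_nonneg _) (hψ i (T i))
    have hτnn : 0 ≤ τ i V := le_trans (abs_nonneg _) ih
    have h1 : |ψ i V (T i) * T i| ≤ Ψ i V (τ i V) * τ i V := by
      rw [abs_mul]
      exact mul_le_mul (le_trans (hψ i (T i)) (hΨmono i _ _ (abs_nonneg _) ih))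
        ih (abs_nonneg _) (le_trans hΨ0 (hΨmono i _ _ (abs_nonneg _) ih))
    calc |T (i + 1)| ≤ |-(β (i + 1) * (ψ i V (T i) * T i))|
          + |β (i + 1) * Tp i - v (i + 1)| := by rw [key]; exact abs_add_le _ _
      _ ≤ β (i + 1) * (Ψ i V (τ i V) * τ i V) + ω (i + 1) := by
          refine add_le_add ?_ hω
          rw [abs_neg, abs_mul, abs_of_pos (hβ (i + 1))]
          exact mul_le_mul_of_nonneg_left h1 (hβ (i + 1)).le
      _ = τ (i + 1) V := by rw [hτ]; ring
end

section
/- (Division DSM bound) Let 1/2 ≤ X < 1, 1 ≤ Y < 2, and suppose g(Y) = (1 + σ(Y))/Y with |σ(Y)| ≤ Σ. Let DSF_i satisfy |x - DSF_i(x)| ≤ ω_i for all x (i ≥ 1), and β_i > 0. Define B_0 = 1, H_0 = 0, R_0 = X, and recursively Tp_i = g(Y)·R_i, v_{i+1} = DSF_{i+1}(β_{i+1} Tp_i), B_{i+1} = β_{i+1} B_i, H_{i+1} = H_i + v_{i+1}/B_{i+1}, R_{i+1} = β_{i+1} R_i - v_{i+1} Y. Then, with τ_0(u) = u and τ_{i+1}(u)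 = β_{i+1} Σ τ_i(u) + ω_{i+1}, one has for every i: |X/Y - H_i| ≤ max(τ_i(1/4), τ_i(1)) / B_i. -/
theorem dsm_division_bound
    (X Y Sig : ℝ) (g σ : ℝ → ℝ) (β ω : ℕ → ℝ)
    (DSF : ℕ → ℝ → ℝ) (B H R Tp v : ℕ → ℝ) (τ : ℕ → ℝ → ℝ)
    (hX1 : 1/2 ≤ X) (hX2 : X < 1) (hY1 : 1 ≤ Y) (hY2 : Y < 2)
    (hg : g Y = (1 + σ Y) / Y) (hσ : |σ Y| ≤ Sig)
    (hβ : ∀ i, 0 < β i)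
    (hDSF : ∀ i, 1 ≤ i → ∀ x : ℝ, |x - DSF i x| ≤ ω i)
    (hB0 : B 0 = 1) (hH0 : H 0 = 0) (hR0 : R 0 = X)
    (hTp : ∀ i, Tp i = g Y * R i)
    (hv : ∀ i, v (i + 1) = DSF (i + 1) (β (i + 1) * Tp i))
    (hB : ∀ i, B (i + 1) = β (i + 1) * B i)
    (hH : ∀ i, H (i + 1) = H i + v (i + 1) / B (i + 1))
    (hR : ∀ i, R (i + 1) = β (i + 1) * R i - v (i + 1) * Y)
    (hτ0 : ∀ u, τ 0 u = u)
    (hτ : ∀ i u, τ (i + 1) u = β (i + 1) * Sig * τ i u + ω (i + 1)) :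
    ∀ i, |X / Y - H i| ≤ max (τ i (1/4)) (τ i 1) / B i := by
  have hY0 : (0:ℝ) < Y := lt_of_lt_of_le one_pos hY1
  have hYne : Y ≠ 0 := ne_of_gt hY0
  have hSig : (0:ℝ) ≤ Sig := le_trans (abs_nonneg _) hσ
  have key : ∀ i, 0 < B i ∧ R i = Y * (B i * (X / Y - H i)) ∧
      |B i * (X / Y - H i)| ≤ τ i 1 ∧ τ i (1/4) ≤ τ i 1 := by
    intro i
    induction i with
    | zero =>
      refine ⟨by rw [hB0]; norm_num, by rw [hB0, hH0, hR0]; field_simp; ring, ?_, ?_⟩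
      · rw [hB0, hH0, hτ0]
        have h1 : (0:ℝ) ≤ X / Y := div_nonneg (by linarith) (le_of_lt hY0)
        rw [sub_zero, one_mul, abs_of_nonneg h1]
        rw [div_le_one hY0]; linarith
      · rw [hτ0, hτ0]; norm_num
    | succ i ih =>
      obtain ⟨hBpos, hRT, hT, hmono⟩ := ih
      have hBne : B i ≠ 0 := ne_of_gt hBpos
      have hβne : β (i+1) ≠ 0 := ne_of_gt (hβ (i+1))
      have hBpos' : 0 < B (i+1) := by rw [hB]; exact mul_pos (hβ (i+1)) hBpos
      set T := B i * (X / Y - H i) with hTdef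
      have hTn : B (i+1) * (X / Y - H (i+1)) = β (i+1) * T - v (i+1) := by
        rw [hH, hB, hTdef]; field_simp; ring
      have ha : β (i+1) * Tp i = β (i+1) * (1 + σ Y) * T := by
        rw [hTp, hg, hRT]; field_simp
      refine ⟨hBpos', ?_, ?_, ?_⟩
      · rw [hR, hRT, hTn]; ring
      · rw [hTn]
        have h1 : |β (i+1) * T - v (i+1)| ≤
            |β (i+1) * T - β (i+1) * Tp i| + |β (i+1) * Tp i - v (i+1)| := by
          have := abs_sub_le (β (i+1) * T) (β (i+1) * Tp i) (v (i+1))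
          linarith
        have h2 : |β (i+1) * Tp i - v (i+1)| ≤ ω (i+1) := by
          rw [hv]; exact hDSF (i+1) (Nat.le_add_left 1 i) _
        have h3 : |β (i+1) * T - β (i+1) * Tp i| = β (i+1) * (|σ Y| * |T|) := by
          rw [ha]
          have : β (i+1) * T - β (i+1) * (1 + σ Y) * T = -(β (i+1) * (σ Y * T)) := by
            ring
          rw [this, abs_neg, abs_mul, abs_mul, abs_of_pos (hβ (i+1))]
        have h4 : β (i+1) * (|σ Y| * |T|) ≤ β (i+1) * Sig * τ i 1 := by
          rw [mul_assoc (β (i+1)) Sig]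
          exact mul_le_mul_of_nonneg_left
            (mul_le_mul hσ hT (abs_nonneg _) hSig) (le_of_lt (hβ (i+1)))
        rw [hτ]
        calc |β (i+1) * T - v (i+1)|
            ≤ |β (i+1) * T - β (i+1) * Tp i| + |β (i+1) * Tp i - v (i+1)| := h1
          _ ≤ β (i+1) * Sig * τ i 1 + ω (i+1) := by rw [h3]; linarith
      · rw [hτ, hτ]
        have : β (i+1) * Sig * τ i (1/4) ≤ β (i+1) * Sig * τ i 1 :=
          mul_le_mul_of_nonneg_left hmono (mul_nonneg (le_of_lt (hβ (i+1))) hSig)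
        linarith
  intro i
  obtain ⟨hBpos, _, hT, hmono⟩ := key i
  rw [max_eq_right hmono]
  rw [le_div_iff₀ hBpos]
  calc |X / Y - H i| * B i = |B i * (X / Y - H i)| := by
        rw [abs_mul, abs_of_pos hBpos]; ring
    _ ≤ τ i 1 := hT
end

section
/- (Square root DSM bound) Let 1/4 ≤ X < 1 and suppose g(X) = (1 + σ(X))/√X with |σ(X)| ≤ Σ. Let DSF_i satisfy |x - DSF_i(x)| ≤ ω_i (i ≥ 1), β_i > 0. Define B_0 = 1, H_0 = 0, R_0 = X/2, and recursively Tp_i = μ_i g(X) R_i with μ_0 = 2, μ_i = 1 for i ≥ 1; v_{i+1} = DSF_{i+1}(β_{i+1} Tp_i); B_{i+1} = β_{i+1} B_i; H_{i+1} = H_i + v_{i+1}/B_{i+1}; R_{i+1} = β_{i+1} R_i - v_{i+1}(H_{i+1}+H_i)/2. Define τ_0(u)=u and τ_{i+1}(u) = β_{i+1} · (if i = 0 then Σ else Σ + (1+Σ)·τ_i(u)/(2u·B_i)) · τ_i(u) + ω_{i+1}. Then for every i: |√X - H_i| ≤ max(τ_i(1/2), τ_i(1)) / B_i. -/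
open Set

inductive Posy : (ℝ → ℝ) → Prop
  | mono (c : ℝ) (k m : ℕ) (hc : 0 ≤ c) : Posy (fun u => c * u ^ k * u⁻¹ ^ m)
  | add {f g : ℝ → ℝ} (hf : Posy f) (hg : Posy g) : Posy (fun u => f u + g u)

lemma Posy.const (c : ℝ) (hc : 0 ≤ c) : Posy (fun _ : ℝ => c) := by
  simpa using Posy.mono c 0 0 hc

lemma Posy.id' : Posy (fun u : ℝ => u) := by
  simpa using Posy.mono 1 1 0 zero_le_one

lemma Posy.smul {f : ℝ → ℝ} (c : ℝ) (hc : 0 ≤ c) (hf : Posy f) :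
    Posy (fun u => c * f u) := by
  induction hf with
  | mono d k m hd =>
    have h := Posy.mono (c * d) k m (mul_nonneg hc hd)
    convert h using 1; funext u; ring
  | add h1 h2 ih1 ih2 =>
    have h := ih1.add ih2
    convert h using 1; funext u; ring

lemma Posy.mul {f g : ℝ → ℝ} (hf : Posy f) (hg : Posy g) :
    Posy (fun u => f u * g u) := by
  induction hf with
  | mono c k m hc =>
    induction hg with
    | mono d k' m' hd =>
      have h := Posy.mono (c * d) (k + k') (m + m') (mul_nonneg hc hd)
      convert h using 1; funext u; ring
    | add h1 h2 ih1 ih2 =>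
      have h := ih1.add ih2
      convert h using 1; funext u; ring
  | add h1 h2 ih1 ih2 =>
    have h := ih1.add ih2
    convert h using 1; funext u; ring

lemma Posy.inv_mul {f : ℝ → ℝ} (hf : Posy f) : Posy (fun u => f u * u⁻¹) := by
  have h := hf.mul (Posy.mono 1 0 1 zero_le_one)
  convert h using 1; funext u; ring

lemma Posy.convexOn {f : ℝ → ℝ} (hf : Posy f) : ConvexOn ℝ (Ioi (0:ℝ)) f := by
  induction hf with
  | mono c k m hc =>
    have h := ((convexOn_zpow ((k : ℤ) - m)).smul hc)
    refine h.congr fun u hu => ?_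
    have hu0 : u ≠ 0 := ne_of_gt hu
    simp only [Pi.smul_apply, smul_eq_mul]
    rw [zpow_sub₀ hu0, zpow_natCast, zpow_natCast, div_eq_mul_inv, inv_pow]
    ring
  | add h1 h2 ih1 ih2 => exact ih1.add ih2

lemma Posy.le_max {f : ℝ → ℝ} (hf : Posy f) {u : ℝ} (h1 : 1/2 ≤ u) (h2 : u ≤ 1) :
    f u ≤ max (f (1/2)) (f 1) :=
  hf.convexOn.le_max_of_mem_Icc (by norm_num) (by norm_num) ⟨h1, h2⟩

theorem dsm_sqrt_bound
    (X Sig : ℝ) (g σ : ℝ → ℝ) (β ω : ℕ → ℝ)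
    (DSF : ℕ → ℝ → ℝ) (B H R Tp v : ℕ → ℝ) (τ : ℕ → ℝ → ℝ)
    (hX1 : 1/4 ≤ X) (hX2 : X < 1)
    (hg : g X = (1 + σ X) / Real.sqrt X) (hσ : |σ X| ≤ Sig)
    (hβ : ∀ i, 0 < β i)
    (hDSF : ∀ i, 1 ≤ i → ∀ x : ℝ, |x - DSF i x| ≤ ω i)
    (hB0 : B 0 = 1) (hH0 : H 0 = 0) (hR0 : R 0 = X / 2)
    (hTp : ∀ i, Tp i = (if i = 0 then (2:ℝ) else 1) * g X * R i)
    (hv : ∀ i, v (i + 1) = DSF (i + 1) (β (i + 1) * Tp i))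
    (hB : ∀ i, B (i + 1) = β (i + 1) * B i)
    (hH : ∀ i, H (i + 1) = H i + v (i + 1) / B (i + 1))
    (hR : ∀ i, R (i + 1) = β (i + 1) * R i - v (i + 1) * (H (i + 1) + H i) / 2)
    (hτ0 : ∀ u, τ 0 u = u)
    (hτ : ∀ i u, τ (i + 1) u =
        β (i + 1) * (if i = 0 then Sig else Sig + (1 + Sig) * τ i u / (2 * u * B i)) * τ i u
          + ω (i + 1)) :
    ∀ i, |Real.sqrt X - H i| ≤ max (τ i (1/2)) (τ i 1) / B i := by
  set V : ℝ := Real.sqrt X with hVdef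
  have hX0 : (0:ℝ) ≤ X := by linarith
  have hVsq : V * V = X := Real.mul_self_sqrt hX0
  have hVhalf : 1/2 ≤ V := by
    have h14 : Real.sqrt (1/4) = 1/2 := by
      rw [show (1/4:ℝ) = (1/2)^2 by norm_num, Real.sqrt_sq (by norm_num)]
    calc (1/2:ℝ) = Real.sqrt (1/4) := h14.symm
    _ ≤ V := Real.sqrt_le_sqrt hX1
  have hV1 : V ≤ 1 := by
    rw [hVdef, show (1:ℝ) = Real.sqrt 1 by simp]
    exact Real.sqrt_le_sqrt hX2.le
  have hVpos : 0 < V := by linarith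
  have hSig : 0 ≤ Sig := le_trans (abs_nonneg _) hσ
  have hω : ∀ i : ℕ, 0 ≤ ω (i + 1) := fun i =>
    le_trans (abs_nonneg _) (hDSF (i + 1) (Nat.le_add_left 1 i) 0)
  have hBpos : ∀ i, 0 < B i := by
    intro i; induction i with
    | zero => rw [hB0]; norm_num
    | succ n ih => rw [hB n]; exact mul_pos (hβ (n+1)) ih
  -- R in terms of V, H
  have key : ∀ i, 2 * R i = B i * (V - H i) * (V + H i) := by
    intro i; induction i with
    | zero => rw [hR0, hB0, hH0, ← hVsq]; ring
    | succ n ih =>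
      have hBn1 := (hBpos (n+1)).ne'
      have hv' : v (n+1) = B (n+1) * (H (n+1) - H n) := by
        rw [hH n]; field_simp; ring
      rw [hR n, hv', hB n]
      linear_combination (β (n+1)) * ih
  -- main bound on T i := B i * (V - H i)
  have hT : ∀ i, |B i * (V - H i)| ≤ τ i V := by
    intro i; induction i with
    | zero =>
      rw [hB0, hH0, hτ0]
      rw [show (1:ℝ) * (V - 0) = V by ring, abs_of_pos hVpos]
    | succ n ih =>
      have hBn := (hBpos n).ne'
      have hβn := (hβ (n+1)).ne'
      have hβpos := hβ (n+1)
      have hTrec : B (n+1) * (V - H (n+1)) =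
          β (n+1) * (B n * (V - H n)) - v (n+1) := by
        rw [hH n, hB n]; field_simp; ring
      have hDSFb : |β (n+1) * Tp n - v (n+1)| ≤ ω (n+1) := by
        rw [hv n]; exact hDSF (n+1) (Nat.le_add_left 1 n) _
      have hτnn : 0 ≤ τ n V := le_trans (abs_nonneg _) ih
      set T := B n * (V - H n) with hTdef
      rcases Nat.eq_zero_or_pos n with hn0 | hn1
      · -- n = 0
        subst hn0
        have hTp0 : Tp 0 = (1 + σ X) * V := by
          rw [hTp 0, if_pos rfl, hg, hR0, ← hVsq]
          field_simp
        have hTV : T = V := by rw [hTdef, hB0, hH0]; ring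
        have h1 : |T - Tp 0| ≤ Sig * V := by
          rw [hTp0, hTV]
          have : V - (1 + σ X) * V = -(σ X) * V := by ring
          rw [this, abs_mul, abs_neg, abs_of_pos hVpos]
          exact mul_le_mul_of_nonneg_right hσ hVpos.le
        calc |B 1 * (V - H 1)| = |β 1 * (T - Tp 0) + (β 1 * Tp 0 - v 1)| := by
              rw [hTrec]; ring_nf
          _ ≤ |β 1 * (T - Tp 0)| + |β 1 * Tp 0 - v 1| := abs_add_le _ _
          _ ≤ β 1 * (Sig * V) + ω 1 := by
              rw [abs_mul, abs_of_pos hβpos]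
              exact add_le_add (mul_le_mul_of_nonneg_left h1 hβpos.le) hDSFb
          _ = τ 1 V := by rw [hτ 0 V, if_pos rfl, hτ0]; ring
      · -- n ≥ 1
        have hn0 : n ≠ 0 := Nat.pos_iff_ne_zero.mp hn1
        have hRn : R n = (B n * (V - H n)) * (V + H n) / 2 := by linarith [key n]
        have hid : T - Tp n = -(σ X) * T + (1 + σ X) * T^2 / (2 * V * B n) := by
          rw [hTp n, if_neg hn0, hg, hRn, hTdef]
          field_simp
          ring
        have h1 : |T - Tp n| ≤ Sig * τ n V + (1 + Sig) * (τ n V)^2 / (2 * V * B n) := by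
          rw [hid]
          calc |-(σ X) * T + (1 + σ X) * T^2 / (2 * V * B n)|
              ≤ |-(σ X) * T| + |(1 + σ X) * T^2 / (2 * V * B n)| := abs_add_le _ _
            _ ≤ Sig * τ n V + (1 + Sig) * (τ n V)^2 / (2 * V * B n) := by
                have hd : 0 < 2 * V * B n := mul_pos (mul_pos two_pos hVpos) (hBpos n)
                have e1 : |-(σ X) * T| ≤ Sig * τ n V := by
                  rw [abs_mul, abs_neg]
                  exact mul_le_mul hσ ih (abs_nonneg _) hSig
                have e2 : |(1 + σ X) * T^2 / (2 * V * B n)| ≤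
                    (1 + Sig) * (τ n V)^2 / (2 * V * B n) := by
                  have hT2 : |T^2| ≤ (τ n V)^2 := by
                    rw [abs_pow]
                    exact pow_le_pow_left₀ (abs_nonneg _) ih 2
                  have hσ1 : |1 + σ X| ≤ 1 + Sig := by
                    calc |1 + σ X| ≤ |(1:ℝ)| + |σ X| := abs_add_le _ _
                      _ ≤ 1 + Sig := by rw [abs_one]; linarith
                  have hm : |1 + σ X| * |T^2| ≤ (1 + Sig) * (τ n V)^2 :=
                    mul_le_mul hσ1 hT2 (abs_nonneg _) (by linarith)
                  rw [abs_div, abs_mul, abs_of_pos hd, div_le_div_iff₀ hd hd]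
                  exact mul_le_mul_of_nonneg_right hm hd.le
                linarith
        calc |B (n+1) * (V - H (n+1))| = |β (n+1) * (T - Tp n) + (β (n+1) * Tp n - v (n+1))| := by
              rw [hTrec]; ring_nf
          _ ≤ |β (n+1) * (T - Tp n)| + |β (n+1) * Tp n - v (n+1)| := abs_add_le _ _
          _ ≤ β (n+1) * (Sig * τ n V + (1 + Sig) * (τ n V)^2 / (2 * V * B n)) + ω (n+1) := by
              rw [abs_mul, abs_of_pos hβpos]
              exact add_le_add (mul_le_mul_of_nonneg_left h1 hβpos.le) hDSFb
          _ = τ (n+1) V := by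
              rw [hτ n V, if_neg hn0]
              field_simp
  -- τ agrees with a posynomial on positives
  have hPosy : ∀ i, ∃ f, Posy f ∧ ∀ u : ℝ, 0 < u → τ i u = f u := by
    intro i; induction i with
    | zero => exact ⟨_, Posy.id', fun u _ => hτ0 u⟩
    | succ n ih =>
      obtain ⟨f, hf, hfe⟩ := ih
      rcases Nat.eq_zero_or_pos n with hn0 | hn1
      · subst hn0
        refine ⟨fun u => (β 1 * Sig) * f u + ω 1,
          (hf.smul _ (mul_nonneg (hβ 1).le hSig)).add (Posy.const _ (hω 0)), fun u hu => ?_⟩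
        rw [hτ 0 u, if_pos rfl, hfe u hu]
      · have hn0 : n ≠ 0 := Nat.pos_iff_ne_zero.mp hn1
        refine ⟨fun u => (β (n+1) * Sig) * f u +
            (β (n+1) * (1 + Sig) / (2 * B n)) * (f u * f u * u⁻¹) + ω (n+1),
          ((hf.smul _ (mul_nonneg (hβ (n+1)).le hSig)).add
            (((hf.mul hf).inv_mul).smul _ (div_nonneg
              (mul_nonneg (hβ (n+1)).le (by linarith)) (by linarith [hBpos n])))).add
            (Posy.const _ (hω n)),
          fun u hu => ?_⟩
        rw [hτ n u, if_neg hn0, hfe u hu]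
        have hBn := (hBpos n).ne'
        field_simp
  -- conclusion
  intro i
  obtain ⟨f, hf, hfe⟩ := hPosy i
  have hmax : τ i V ≤ max (τ i (1/2)) (τ i 1) := by
    rw [hfe V hVpos, hfe (1/2) (by norm_num), hfe 1 one_pos]
    exact hf.le_max hVhalf hV1
  rw [le_div_iff₀ (hBpos i)]
  calc |V - H i| * B i = |B i * (V - H i)| := by
        rw [abs_mul, abs_of_pos (hBpos i)]; ring
    _ ≤ τ i V := hT i
    _ ≤ max (τ i (1/2)) (τ i 1) := hmax
end
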